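/- arXiv:2508.13063 — 7 statements merged into one kernel-verified Lean document; each statement's English description precedes it below -/
import Mathlib

section
/- Let R be a unital ring, free as a ℤ-module with finite basis B containing the unit 1, with nonnegative integer structure constants N_{x,y}^{z} (so x·y = Σ_z N_{x,y}^z z for x, y ∈ B). Assume there is an involution * : B → B satisfying N_{x,y}^{1} = δ_{y,x*} and Frobenius reciprocity N_{x,y}^{z} = N_{x*,z}^{y} for all x, y, z ∈ B. Let d : R ⊗ ℂ → ℂ be the ℂ-algebra homomorphism induced by a ring homomorphism with d(x*) = d(x) and d(x) ≠ 0 for all x ∈ B, and set D = Σ_{x ∈ B} d(x)² ≠ 0. Then e := (1/D) Σ_{x ∈ B} d(x) x ∈ R ⊗ ℂ satisfies x·e = d(x)·e for all x ∈ B; consequently e is a central idempotent and (R ⊗ ℂ)·e = ℂ·e is one-dimensional, so e is a primitive idempotent. -/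
/-! Write `S = Σ_y d(y) y`. The coefficient of `z` in `x·S` is `Σ_y d(y) N_{x,y}^z`, which by
Frobenius reciprocity is `Σ_y N_{x*,z}^y d(y) = d(x* z) = d(x) d(z)`; hence `x·S = d(x) S`.
Comparing the coefficient of `1` in `(a c) z*` and `a (c z*)` gives `N_{a,c}^z = N_{c,z*}^{a*}`,
and the same computation then yields `S·x = d(x) S`. By linearity `r e = e r = d(r) e` for every
`r`, and `d(e) = D⁻¹ Σ_y d(y)² = 1` makes `e` idempotent. -/

open Module

section Character

variable {K A ι : Type*} [CommSemiring K] [Semiring A] [Algebra K A] (b : Basis ι K A)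
  (d : A →ₐ[K] K) {s : A}

theorem AlgHom.mul_eq_smul_of_basis_mul (h : ∀ i, b i * s = d (b i) • s) (r : A) :
    r * s = d r • s :=
  LinearMap.congr_fun
    (b.ext (f₁ := LinearMap.mulRight K s) (f₂ := d.toLinearMap.smulRight s) h) r

theorem AlgHom.mul_eq_smul_of_mul_basis (h : ∀ i, s * b i = d (b i) • s) (r : A) :
    s * r = d r • s :=
  LinearMap.congr_fun
    (b.ext (f₁ := LinearMap.mulLeft K s) (f₂ := d.toLinearMap.smulRight s) h) r

end Character

namespace StructConst

variable {K A ι : Type*} [Fintype ι] [CommSemiring K] [Semiring A] [Algebra K A]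
  {b : Basis ι K A} {N : ι → ι → ι → ℕ}
  (hmul : ∀ x y, b x * b y = ∑ z, (N x y z : K) • b z)
include hmul

theorem repr_basis_mul_basis (x y z : ι) : b.repr (b x * b y) z = N x y z := by
  rw [hmul, Basis.repr_sum_self]

theorem repr_mul_basis (r : A) (y z : ι) :
    b.repr (r * b y) z = ∑ x, b.repr r x * N x y z := by
  have hr : r * b y = ∑ x, b.repr r x • (b x * b y) := by
    simp_rw [← smul_mul_assoc, ← Finset.sum_mul, b.sum_repr]
  simp [hr, repr_basis_mul_basis hmul]

theorem repr_basis_mul (x : ι) (r : A) (z : ι) :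
    b.repr (b x * r) z = ∑ y, b.repr r y * N x y z := by
  have hr : b x * r = ∑ y, b.repr r y • (b x * b y) := by
    simp_rw [← mul_smul_comm, ← Finset.mul_sum, b.sum_repr]
  simp [hr, repr_basis_mul_basis hmul]

theorem assoc (a c e f : ι) : ∑ w, (N a c w * N w e f : K) = ∑ w, (N c e w * N a w f : K) :=
  calc ∑ w, (N a c w * N w e f : K) = b.repr (b a * b c * b e) f := by
        rw [repr_mul_basis hmul]; simp only [repr_basis_mul_basis hmul]
    _ = b.repr (b a * (b c * b e)) f := by rw [mul_assoc]
    _ = ∑ w, (N c e w * N a w f : K) := by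
        rw [repr_basis_mul hmul]; simp only [repr_basis_mul_basis hmul, mul_comm]

theorem rotate [DecidableEq ι] {one : ι} {star : ι → ι} (hstar : Function.Involutive star)
    (hN1 : ∀ x y, N x y one = if y = star x then 1 else 0) (a c z : ι) :
    (N a c z : K) = N c (star z) (star a) := by
  simpa [hN1, hstar.injective.eq_iff, eq_comm] using assoc hmul a c (star z) one

theorem sum_mul_apply (d : A →ₐ[K] K) (x y : ι) :
    ∑ z, (N x y z : K) * d (b z) = d (b x) * d (b y) := by
  simp [← map_mul, hmul]

variable {d : A →ₐ[K] K}

theorem sum_apply_mul_left {star : ι → ι} (hFrob : ∀ x y z, N x y z = N (star x) z y)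
    (hdstar : ∀ x, d (b (star x)) = d (b x)) (x z : ι) :
    ∑ y, d (b y) * N x y z = d (b x) * d (b z) := by
  rw [← hdstar x, ← sum_mul_apply hmul]
  exact Finset.sum_congr rfl fun y _ => by rw [hFrob x, mul_comm]

theorem sum_apply_mul_right [DecidableEq ι] {one : ι} {star : ι → ι}
    (hstar : Function.Involutive star) (hN1 : ∀ x y, N x y one = if y = star x then 1 else 0)
    (hdstar : ∀ x, d (b (star x)) = d (b x)) (x z : ι) :
    ∑ y, d (b y) * N y x z = d (b x) * d (b z) :=
  calc ∑ y, d (b y) * N y x z = ∑ y, d (b y) * N x (star z) (star y) :=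
        Finset.sum_congr rfl fun y _ => by rw [rotate hmul hstar hN1]
    _ = ∑ y, d (b (star y)) * N x (star z) (star (star y)) :=
        (Equiv.sum_comp hstar.toPerm fun y => d (b y) * N x (star z) (star y)).symm
    _ = ∑ y, (N x (star z) y : K) * d (b y) :=
        Finset.sum_congr rfl fun y _ => by rw [hdstar, hstar y, mul_comm]
    _ = d (b x) * d (b z) := by rw [sum_mul_apply hmul, hdstar]

theorem basis_mul_sum_smul (h : ∀ x z, ∑ y, d (b y) * N x y z = d (b x) * d (b z)) (x : ι) :
    b x * ∑ y, d (b y) • b y = d (b x) • ∑ y, d (b y) • b y := by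
  refine b.ext_elem_iff.2 fun z => ?_
  rw [repr_basis_mul hmul, map_smul, Finsupp.smul_apply, b.repr_sum_self, smul_eq_mul]
  exact h x z

theorem sum_smul_mul_basis (h : ∀ x z, ∑ y, d (b y) * N y x z = d (b x) * d (b z)) (x : ι) :
    (∑ y, d (b y) • b y) * b x = d (b x) • ∑ y, d (b y) • b y := by
  refine b.ext_elem_iff.2 fun z => ?_
  rw [repr_mul_basis hmul, map_smul, Finsupp.smul_apply, b.repr_sum_self, smul_eq_mul]
  exact h x z

end StructConst

theorem stmt_2_general {ι : Type*} [Fintype ι] [DecidableEq ι] {R : Type*} [Ring R] [Algebra ℂ R]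
    (b : Module.Basis ι ℂ R) (one : ι) (star : ι → ι) (N : ι → ι → ι → ℕ)
    (hmul : ∀ x y : ι, b x * b y = ∑ z : ι, (N x y z : ℂ) • b z)
    (hstar : Function.Involutive star)
    (hN1 : ∀ x y : ι, N x y one = if y = star x then 1 else 0)
    (hFrob : ∀ x y z : ι, N x y z = N (star x) z y)
    (d : R →ₐ[ℂ] ℂ)
    (hdstar : ∀ x : ι, d (b (star x)) = d (b x))
    (hD : (∑ x : ι, (d (b x)) ^ 2) ≠ 0) :
    ∀ e : R, e = (∑ x : ι, (d (b x)) ^ 2)⁻¹ • ∑ x : ι, d (b x) • b x →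
      (∀ x : ι, b x * e = d (b x) • e) ∧
      e * e = e ∧
      (∀ r : R, r * e = e * r) ∧
      (∀ r : R, ∃ c : ℂ, r * e = c • e) := by
  intro e he
  have hS_left := StructConst.basis_mul_sum_smul hmul
    (StructConst.sum_apply_mul_left hmul hFrob hdstar)
  have hS_right := StructConst.sum_smul_mul_basis hmul
    (StructConst.sum_apply_mul_right hmul hstar hN1 hdstar)
  have hleft : ∀ r, r * e = d r • e := d.mul_eq_smul_of_basis_mul b fun x => by
    rw [he, mul_smul_comm, hS_left, smul_comm]
  have hright : ∀ r, e * r = d r • e := d.mul_eq_smul_of_mul_basis b fun x => by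
    rw [he, smul_mul_assoc, hS_right, smul_comm]
  have hde : d e = 1 := by simp [he, map_sum, ← sq, hD]
  exact ⟨fun x => hleft (b x), by rw [hleft, hde, one_smul],
    fun r => (hleft r).trans (hright r).symm, fun r => ⟨d r, hleft r⟩⟩

/-- In the complexification of a based ring with duality `star`, Frobenius reciprocity
and a nonvanishing `*`-invariant character `d`, the element
`e = D⁻¹ Σ_x d(x) x` (with `D = Σ_x d(x)²`) satisfies `x·e = d(x)·e` for every basis
element `x`; consequently `e` is a central idempotent with `(R ⊗ ℂ)·e = ℂ·e`
one-dimensional (so `e` is primitive). -/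
theorem stmt_2 {ι : Type*} [Fintype ι] [DecidableEq ι] {R : Type*} [Ring R] [Algebra ℂ R]
    (b : Module.Basis ι ℂ R) (one : ι) (star : ι → ι) (N : ι → ι → ι → ℕ)
    (hone : b one = 1)
    (hmul : ∀ x y : ι, b x * b y = ∑ z : ι, (N x y z : ℂ) • b z)
    (hstar : Function.Involutive star)
    (hN1 : ∀ x y : ι, N x y one = if y = star x then 1 else 0)
    (hFrob : ∀ x y z : ι, N x y z = N (star x) z y)
    (d : R →ₐ[ℂ] ℂ)
    (hdstar : ∀ x : ι, d (b (star x)) = d (b x))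
    (hd0 : ∀ x : ι, d (b x) ≠ 0)
    (hD : (∑ x : ι, (d (b x)) ^ 2) ≠ 0) :
    ∀ e : R, e = (∑ x : ι, (d (b x)) ^ 2)⁻¹ • ∑ x : ι, d (b x) • b x →
      (∀ x : ι, b x * e = d (b x) • e) ∧
      e * e = e ∧
      (∀ r : R, r * e = e * r) ∧
      (∀ r : R, ∃ c : ℂ, r * e = c • e) :=
  stmt_2_general b one star N hmul hstar hN1 hFrob d hdstar hD
end

section
/- Let A ⊆ B ⊆ B' be finite basis sets with 1 ∈ A, where B' is the basis of a based ring R as above, and assume A and B span unital based subrings of R (closed under multiplication and duality). Let d be a *-invariant nonvanishing character, D_A = Σ_{a∈A} d(a)², D_B = Σ_{b∈B} d(b)², and set e_A = (1/D_A) Σ_{a∈A} d(a) a and e_B = (1/D_B) Σ_{b∈B} d(b) b in R ⊗ ℂ. Then e_A · e_B = e_B. -/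
/-!
Write `S = ∑_{β ∈ B} d(β) β`. Since `B` is closed under multiplication, `x S` only involves
basis elements of `B`, and Frobenius reciprocity `N_{x,β}^z = N_{x*,z}^β` turns the coefficient
of `z` into `∑_β N_{x*,z}^β d(β) = d(x*) d(z) = d(x) d(z)`. Hence `x S = d(x) S` for `x ∈ B`,
so `(∑_{a ∈ A} d(a) a) S = D_A S`.
-/

namespace BasedRing

variable {ι K R : Type*} [Fintype ι] [CommRing K] [Ring R] [Algebra K R]
  {b : ι → R} {N : ι → ι → ι → ℕ} {star : ι → ι} {B : Finset ι}

theorem sum_univ_eq_sum_of_mul_closed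
    (hBmul : ∀ x ∈ B, ∀ y ∈ B, ∀ z : ι, N x y z ≠ 0 → z ∈ B)
    {M : Type*} [AddCommMonoid M] [Module K M] (f : ι → M) {x y : ι} (hx : x ∈ B) (hy : y ∈ B) :
    ∑ z, (N x y z : K) • f z = ∑ z ∈ B, (N x y z : K) • f z := by
  refine (Finset.sum_subset (Finset.subset_univ B) fun z _ hz => ?_).symm
  have : N x y z = 0 := by
    by_contra h
    exact hz (hBmul x hx y hy z h)
  simp [this]

theorem map_mul_eq_sum_of_mul_closed
    (hmul : ∀ x y : ι, b x * b y = ∑ z : ι, (N x y z : K) • b z)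
    (hBmul : ∀ x ∈ B, ∀ y ∈ B, ∀ z : ι, N x y z ≠ 0 → z ∈ B)
    (d : R →ₐ[K] K) {x y : ι} (hx : x ∈ B) (hy : y ∈ B) :
    d (b x) * d (b y) = ∑ z ∈ B, (N x y z : K) • d (b z) := by
  rw [← map_mul, hmul, map_sum, ← sum_univ_eq_sum_of_mul_closed hBmul _ hx hy]
  simp only [map_smul]

theorem sum_mul_coeff_eq
    (hmul : ∀ x y : ι, b x * b y = ∑ z : ι, (N x y z : K) • b z)
    (hFrob : ∀ x y z : ι, N x y z = N (star x) z y)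
    (hBmul : ∀ x ∈ B, ∀ y ∈ B, ∀ z : ι, N x y z ≠ 0 → z ∈ B)
    (hBstar : ∀ x ∈ B, star x ∈ B)
    (d : R →ₐ[K] K) (hdstar : ∀ x : ι, d (b (star x)) = d (b x))
    {x z : ι} (hx : x ∈ B) (hz : z ∈ B) :
    ∑ β ∈ B, d (b β) * (N x β z : K) = d (b x) * d (b z) := by
  calc ∑ β ∈ B, d (b β) * (N x β z : K)
      = ∑ β ∈ B, (N (star x) z β : K) • d (b β) := by
        refine Finset.sum_congr rfl fun β _ => ?_
        rw [hFrob x β z, smul_eq_mul, mul_comm]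
    _ = d (b (star x)) * d (b z) :=
        (map_mul_eq_sum_of_mul_closed hmul hBmul d (hBstar x hx) hz).symm
    _ = d (b x) * d (b z) := by rw [hdstar]

theorem mul_sum_eq_smul
    (hmul : ∀ x y : ι, b x * b y = ∑ z : ι, (N x y z : K) • b z)
    (hFrob : ∀ x y z : ι, N x y z = N (star x) z y)
    (hBmul : ∀ x ∈ B, ∀ y ∈ B, ∀ z : ι, N x y z ≠ 0 → z ∈ B)
    (hBstar : ∀ x ∈ B, star x ∈ B)
    (d : R →ₐ[K] K) (hdstar : ∀ x : ι, d (b (star x)) = d (b x))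
    {x : ι} (hx : x ∈ B) :
    b x * ∑ β ∈ B, d (b β) • b β = d (b x) • ∑ β ∈ B, d (b β) • b β := by
  calc b x * ∑ β ∈ B, d (b β) • b β
      = ∑ β ∈ B, ∑ z ∈ B, (d (b β) * (N x β z : K)) • b z := by
        rw [Finset.mul_sum]
        refine Finset.sum_congr rfl fun β hβ => ?_
        rw [mul_smul_comm, hmul, sum_univ_eq_sum_of_mul_closed hBmul _ hx hβ, Finset.smul_sum]
        simp only [smul_smul]
    _ = ∑ z ∈ B, (∑ β ∈ B, d (b β) * (N x β z : K)) • b z := by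
        rw [Finset.sum_comm]
        simp only [Finset.sum_smul]
    _ = ∑ z ∈ B, (d (b x) * d (b z)) • b z := by
        refine Finset.sum_congr rfl fun z hz => ?_
        rw [sum_mul_coeff_eq hmul hFrob hBmul hBstar d hdstar hx hz]
    _ = d (b x) • ∑ β ∈ B, d (b β) • b β := by
        simp only [Finset.smul_sum, smul_smul]

theorem sum_mul_sum_eq_smul
    (hmul : ∀ x y : ι, b x * b y = ∑ z : ι, (N x y z : K) • b z)
    (hFrob : ∀ x y z : ι, N x y z = N (star x) z y)
    (hBmul : ∀ x ∈ B, ∀ y ∈ B, ∀ z : ι, N x y z ≠ 0 → z ∈ B)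
    (hBstar : ∀ x ∈ B, star x ∈ B)
    (d : R →ₐ[K] K) (hdstar : ∀ x : ι, d (b (star x)) = d (b x))
    {A : Finset ι} (hAB : A ⊆ B) :
    (∑ a ∈ A, d (b a) • b a) * ∑ β ∈ B, d (b β) • b β =
      (∑ a ∈ A, d (b a) ^ 2) • ∑ β ∈ B, d (b β) • b β := by
  rw [Finset.sum_mul, Finset.sum_smul]
  refine Finset.sum_congr rfl fun a ha => ?_
  rw [smul_mul_assoc, mul_sum_eq_smul hmul hFrob hBmul hBstar d hdstar (hAB ha), smul_smul, sq]

end BasedRing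

theorem stmt_3_general {ι : Type*} [Fintype ι] {R : Type*} [Ring R] [Algebra ℂ R]
    (b : Module.Basis ι ℂ R) (star : ι → ι) (N : ι → ι → ι → ℕ)
    (hmul : ∀ x y : ι, b x * b y = ∑ z : ι, (N x y z : ℂ) • b z)
    (hFrob : ∀ x y z : ι, N x y z = N (star x) z y)
    (d : R →ₐ[ℂ] ℂ)
    (hdstar : ∀ x : ι, d (b (star x)) = d (b x))
    (A B : Finset ι)
    (hAB : A ⊆ B)
    (hBmul : ∀ x ∈ B, ∀ y ∈ B, ∀ z : ι, N x y z ≠ 0 → z ∈ B)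
    (hBstar : ∀ x ∈ B, star x ∈ B)
    (hDA : (∑ a ∈ A, (d (b a)) ^ 2) ≠ 0) :
    ((∑ a ∈ A, (d (b a)) ^ 2)⁻¹ • ∑ a ∈ A, d (b a) • b a) *
      ((∑ a ∈ B, (d (b a)) ^ 2)⁻¹ • ∑ a ∈ B, d (b a) • b a) =
      (∑ a ∈ B, (d (b a)) ^ 2)⁻¹ • ∑ a ∈ B, d (b a) • b a := by
  rw [smul_mul_assoc, mul_smul_comm,
    BasedRing.sum_mul_sum_eq_smul hmul hFrob hBmul hBstar d hdstar hAB,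
    smul_comm, smul_smul, smul_smul, mul_assoc, inv_mul_cancel₀ hDA, mul_one]

/-- If `A ⊆ B` are sub-bases of a based ring (each containing the unit, closed under
multiplication and duality), and `d` is a `*`-invariant nonvanishing character, then
the corresponding idempotents satisfy `e_A · e_B = e_B`. -/
theorem stmt_3 {ι : Type*} [Fintype ι] [DecidableEq ι] {R : Type*} [Ring R] [Algebra ℂ R]
    (b : Module.Basis ι ℂ R) (one : ι) (star : ι → ι) (N : ι → ι → ι → ℕ)
    (hone : b one = 1)
    (hmul : ∀ x y : ι, b x * b y = ∑ z : ι, (N x y z : ℂ) • b z)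
    (hstar : Function.Involutive star)
    (hN1 : ∀ x y : ι, N x y one = if y = star x then 1 else 0)
    (hFrob : ∀ x y z : ι, N x y z = N (star x) z y)
    (d : R →ₐ[ℂ] ℂ)
    (hdstar : ∀ x : ι, d (b (star x)) = d (b x))
    (hd0 : ∀ x : ι, d (b x) ≠ 0)
    (A B : Finset ι)
    (honeA : one ∈ A) (hAB : A ⊆ B)
    (hAmul : ∀ x ∈ A, ∀ y ∈ A, ∀ z : ι, N x y z ≠ 0 → z ∈ A)
    (hAstar : ∀ x ∈ A, star x ∈ A)
    (hBmul : ∀ x ∈ B, ∀ y ∈ B, ∀ z : ι, N x y z ≠ 0 → z ∈ B)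
    (hBstar : ∀ x ∈ B, star x ∈ B)
    (hDA : (∑ a ∈ A, (d (b a)) ^ 2) ≠ 0)
    (hDB : (∑ a ∈ B, (d (b a)) ^ 2) ≠ 0) :
    ((∑ a ∈ A, (d (b a)) ^ 2)⁻¹ • ∑ a ∈ A, d (b a) • b a) *
      ((∑ a ∈ B, (d (b a)) ^ 2)⁻¹ • ∑ a ∈ B, d (b a) • b a) =
      (∑ a ∈ B, (d (b a)) ^ 2)⁻¹ • ∑ a ∈ B, d (b a) • b a :=
  stmt_3_general b star N hmul hFrob d hdstar A B hAB hBmul hBstar hDA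
end

section
/- Let I be a finite index set with a distinguished element 0, and let S be a symmetric invertible complex matrix indexed by I with all S_{0,i} ≠ 0 and satisfying Σ_{m∈I} S_{i,m} S_{m,j*} = Δ·δ_{i,j} for an involution * on I and a nonzero scalar Δ (i.e. S² = Δ·C where C is the permutation matrix of *). Let K be the ℂ-algebra with basis {x_i}_{i∈I} and multiplication given by the Verlinde formula: x_i x_j = Σ_k N_{ij}^k x_k where N_{ij}^k = Σ_m S_{i,m} S_{j,m} S_{m,k*} / (Δ · S_{0,m}) (assumed to define an associative unital algebra with unit x_0). Define e_i := (S_{0,i}/Δ) Σ_j S_{i,j} x_{j*}. Then the e_i are pairwise orthogonal idempotents: e_i e_j = δ_{i,j} e_i, and Σ_{i∈I} e_i = x_0. -/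
/-!
The vectors `f a = ∑ l, S a l • x (star l)` are common eigenvectors of left multiplication:
by the Verlinde formula and `∑ l, S a l * S (star l) m = Δ δ_{a,m}` (which holds because `S`
commutes with `S² = Δ C`), `x j * f a = (S j a / S zero a) • f a`. Expanding `f b` in the basis
then gives `f b * f a = δ_{b,a} (Δ / S zero a) • f a`, so the rescaled `e a = (S zero a / Δ) • f a`
are orthogonal idempotents, and the column sums `∑ a, S zero a * S a l = Δ δ_{star l, zero}`
give `∑ a, e a = x zero`.
-/

namespace Verlinde

variable {𝕜 I : Type*} [Field 𝕜] [Fintype I] {S : Matrix I I 𝕜} {Δ : 𝕜} {star : I → I}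
  {R : Type*} [Ring R] [Algebra 𝕜 R] {x : I → R} {zero : I}

theorem sum_smul_comp_star (hstar : Function.Involutive star) (c : I → 𝕜) :
    ∑ l : I, c l • x (star l) = ∑ k : I, c (star k) • x k := by
  simpa [hstar _] using (Equiv.sum_comp (hstar.toPerm _) fun l => c l • x (star l)).symm

variable [DecidableEq I]

/-- `S² = Δ C`, with `C` the permutation matrix of `star`. -/
def SqEqSmulConj (S : Matrix I I 𝕜) (Δ : 𝕜) (star : I → I) : Prop :=
  ∀ i j : I, ∑ m : I, S i m * S m (star j) = Δ * if i = j then 1 else 0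

def VerlindeMul (S : Matrix I I 𝕜) (Δ : 𝕜) (zero : I) (star : I → I) (x : I → R) : Prop :=
  ∀ i j : I, x i * x j = ∑ k : I, (∑ m : I, S i m * S j m * S m (star k) / (Δ * S zero m)) • x k

theorem sum_mul_eq_ite (hstar : Function.Involutive star) (hsq : SqEqSmulConj S Δ star)
    (i k : I) : ∑ m : I, S i m * S m k = if star k = i then Δ else 0 := by
  simpa [hstar k, eq_comm] using hsq i (star k)

theorem apply_star_left (hΔ : Δ ≠ 0) (hstar : Function.Involutive star)
    (hsq : SqEqSmulConj S Δ star) (i j : I) : S (star i) j = S i (star j) := by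
  have hS2 := sum_mul_eq_ite hstar hsq
  refine mul_left_cancel₀ hΔ ?_
  calc Δ * S (star i) j = ∑ m : I, (∑ k : I, S i k * S k m) * S m j := by
        simp [hS2, hstar.eq_iff, mul_comm]
    _ = ∑ k : I, S i k * ∑ m : I, S k m * S m j := by
        simp_rw [Finset.sum_mul, Finset.mul_sum, mul_assoc]
        exact Finset.sum_comm
    _ = Δ * S i (star j) := by simp [hS2, mul_comm]

theorem sum_mul_star_apply (hΔ : Δ ≠ 0) (hstar : Function.Involutive star)
    (hsq : SqEqSmulConj S Δ star) (a m : I) :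
    ∑ l : I, S a l * S (star l) m = if a = m then Δ else 0 := by
  simpa [apply_star_left hΔ hstar hsq] using hsq a m

theorem mul_sum_smul_star (hΔ : Δ ≠ 0) (hstar : Function.Involutive star)
    (hsq : SqEqSmulConj S Δ star) (hmul : VerlindeMul S Δ zero star x) (j a : I) :
    x j * ∑ l : I, S a l • x (star l) = (S j a / S zero a) • ∑ l : I, S a l • x (star l) := by
  have hcoeff (k : I) :
      ∑ l : I, S a l * ∑ m : I, S j m * S (star l) m * S m (star k) / (Δ * S zero m) =
        S j a / S zero a * S a (star k) := by
    calc ∑ l : I, S a l * ∑ m : I, S j m * S (star l) m * S m (star k) / (Δ * S zero m)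
        = ∑ m : I, (∑ l : I, S a l * S (star l) m) * (S j m * S m (star k) / (Δ * S zero m)) := by
          simp_rw [Finset.mul_sum, Finset.sum_mul]
          rw [Finset.sum_comm]
          refine Finset.sum_congr rfl fun m _ => Finset.sum_congr rfl fun l _ => ?_
          ring
      _ = S j a / S zero a * S a (star k) := by
          simp only [sum_mul_star_apply hΔ hstar hsq, ite_mul, zero_mul, Finset.sum_ite_eq,
            Finset.mem_univ, if_true]
          field_simp
  calc x j * ∑ l : I, S a l • x (star l)
      = ∑ k : I, (∑ l : I, S a l * ∑ m : I, S j m * S (star l) m * S m (star k) / (Δ * S zero m))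
          • x k := by
        rw [Finset.mul_sum]
        simp_rw [mul_smul_comm, hmul j, Finset.smul_sum, smul_smul, Finset.sum_smul]
        exact Finset.sum_comm
    _ = (S j a / S zero a) • ∑ l : I, S a l • x (star l) := by
        simp_rw [hcoeff, sum_smul_comp_star hstar, Finset.smul_sum, smul_smul]

theorem sum_smul_star_mul_sum_smul_star (hΔ : Δ ≠ 0) (hstar : Function.Involutive star)
    (hsq : SqEqSmulConj S Δ star) (hmul : VerlindeMul S Δ zero star x) (i j : I) :
    (∑ l : I, S i l • x (star l)) * ∑ l : I, S j l • x (star l) =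
      (if i = j then Δ / S zero j else 0) • ∑ l : I, S j l • x (star l) := by
  simp_rw [Finset.sum_mul, smul_mul_assoc, mul_sum_smul_star hΔ hstar hsq hmul, smul_smul,
    ← Finset.sum_smul, ← mul_div_assoc, ← Finset.sum_div, sum_mul_star_apply hΔ hstar hsq,
    ite_div, zero_div]

def idem (S : Matrix I I 𝕜) (Δ : 𝕜) (zero : I) (star : I → I) (x : I → R) (i : I) : R :=
  (S zero i / Δ) • ∑ l : I, S i l • x (star l)

theorem idem_mul_idem (hΔ : Δ ≠ 0) (hS0 : ∀ i : I, S zero i ≠ 0)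
    (hstar : Function.Involutive star) (hsq : SqEqSmulConj S Δ star)
    (hmul : VerlindeMul S Δ zero star x) (i j : I) :
    idem S Δ zero star x i * idem S Δ zero star x j =
      if i = j then idem S Δ zero star x i else 0 := by
  rw [idem, idem, smul_mul_smul_comm, sum_smul_star_mul_sum_smul_star hΔ hstar hsq hmul,
    smul_smul]
  split_ifs with hij
  · subst hij
    congr 1
    field_simp [hS0 i]
  · simp

theorem sum_idem (hΔ : Δ ≠ 0) (hstar : Function.Involutive star)
    (hsq : SqEqSmulConj S Δ star) : ∑ i : I, idem S Δ zero star x i = x zero := by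
  have hcol (l : I) : ∑ i : I, S zero i / Δ * S i l = if star l = zero then 1 else 0 := by
    simp_rw [div_mul_eq_mul_div, ← Finset.sum_div, sum_mul_eq_ite hstar hsq]
    split_ifs <;> simp [hΔ]
  simp_rw [idem, Finset.smul_sum, smul_smul]
  rw [Finset.sum_comm]
  simp_rw [← Finset.sum_smul, hcol, ite_smul, one_smul, zero_smul, hstar.eq_iff,
    Finset.sum_ite_eq', Finset.mem_univ, if_true, hstar zero]

end Verlinde

theorem stmt_4_general {I : Type*} [Fintype I] [DecidableEq I] {R : Type*} [Ring R] [Algebra ℂ R]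
    (x : Module.Basis I ℂ R) (zero : I) (star : I → I) (S : Matrix I I ℂ) (Δ : ℂ)
    (hS0 : ∀ i : I, S zero i ≠ 0)
    (hΔ : Δ ≠ 0)
    (hstar : Function.Involutive star)
    (hsq : ∀ i j : I, (∑ m : I, S i m * S m (star j)) = Δ * (if i = j then 1 else 0))
    (hmul : ∀ i j : I, x i * x j =
      ∑ k : I, (∑ m : I, S i m * S j m * S m (star k) / (Δ * S zero m)) • x k) :
    (∀ i j : I,
        ((S zero i / Δ) • ∑ l : I, S i l • x (star l)) *
          ((S zero j / Δ) • ∑ l : I, S j l • x (star l)) =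
        if i = j then (S zero i / Δ) • ∑ l : I, S i l • x (star l) else 0) ∧
    (∑ i : I, (S zero i / Δ) • ∑ l : I, S i l • x (star l)) = x zero :=
  ⟨Verlinde.idem_mul_idem hΔ hS0 hstar hsq hmul, Verlinde.sum_idem hΔ hstar hsq⟩

/-- In the Verlinde fusion algebra `K` determined by a symmetric invertible matrix `S`
with `S² = Δ·C` (charge conjugation `C`), `S_{0,i} ≠ 0`, the elements
`e_i = (S_{0,i}/Δ) Σ_j S_{i,j} x_{j*}` are pairwise orthogonal idempotents summing
to the unit `x_0`. -/
theorem stmt_4 {I : Type*} [Fintype I] [DecidableEq I] {R : Type*} [Ring R] [Algebra ℂ R]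
    (x : Module.Basis I ℂ R) (zero : I) (star : I → I) (S : Matrix I I ℂ) (Δ : ℂ)
    (hsymm : ∀ i j : I, S i j = S j i)
    (hS0 : ∀ i : I, S zero i ≠ 0)
    (hΔ : Δ ≠ 0)
    (hstar : Function.Involutive star)
    (hsq : ∀ i j : I, (∑ m : I, S i m * S m (star j)) = Δ * (if i = j then 1 else 0))
    (hone : x zero = 1)
    (hmul : ∀ i j : I, x i * x j =
      ∑ k : I, (∑ m : I, S i m * S j m * S m (star k) / (Δ * S zero m)) • x k) :
    (∀ i j : I,
        ((S zero i / Δ) • ∑ l : I, S i l • x (star l)) *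
          ((S zero j / Δ) • ∑ l : I, S j l • x (star l)) =
        if i = j then (S zero i / Δ) • ∑ l : I, S i l • x (star l) else 0) ∧
    (∑ i : I, (S zero i / Δ) • ∑ l : I, S i l • x (star l)) = x zero :=
  stmt_4_general x zero star S Δ hS0 hΔ hstar hsq hmul
end

section
/- With S, I, K as in the Verlinde setting, for each fixed w ∈ I the linear map χ_w : K → ℂ determined on basis elements by χ_w(x_i) = S_{i,w}/S_{0,w} is a ℂ-algebra homomorphism (χ_w(x_0) = 1 and χ_w(x_i x_j) = χ_w(x_i) χ_w(x_j)). -/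
/-!
Expanding `χ_w(x_i x_j) = Σ_k N_{ij}^k S_{k,w}/S_{0,w}` and exchanging the sums over `k` and `m`
leaves the inner sum `Σ_k S_{m,k*} S_{k,w}`, which is `Δ δ_{m,w}`: since `S² = ΔC`, the matrix `S`
commutes with the permutation matrix `C` of `*`, i.e. `S_{k*,w} = S_{k,w*}`, so reindexing `k ↦ k*`
turns the sum into the entry `(S²)_{m,w*}`. Only the term `m = w` survives, giving `S_{i,w} S_{j,w}/S_{0,w}²`.
Multiplicativity on basis vectors extends to all of `K` by bilinearity.
-/

open Finset

theorem Matrix.commute_of_mul_self_eq_smul {n K : Type*} [Fintype n] [Field K]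
    {S C : Matrix n n K} {Δ : K} (hΔ : Δ ≠ 0) (h : S * S = Δ • C) : Commute S C := by
  have : Δ • (S * C) = Δ • (C * S) := by
    rw [← Matrix.mul_smul, ← h, ← Matrix.smul_mul, ← h, Matrix.mul_assoc]
  exact smul_right_injective _ hΔ this

theorem Matrix.apply_involutive_left_eq_apply_involutive_right {n K : Type*} [Fintype n]
    [DecidableEq n] [Field K] {S : Matrix n n K} {σ : n → n} (hσ : Function.Involutive σ)
    {Δ : K} (hΔ : Δ ≠ 0)
    (hsq : ∀ i j, ∑ m, S i m * S m (σ j) = Δ * if i = j then 1 else 0) (a b : n) :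
    S (σ a) b = S a (σ b) := by
  have hSS : S * S = Δ • (hσ.toPerm σ).toPEquiv.toMatrix := by
    ext i k
    have := hsq i (σ k)
    rw [hσ k] at this
    rw [Matrix.mul_apply, this, Matrix.smul_apply, PEquiv.toMatrix_apply]
    simp [eq_comm (a := i), hσ.eq_iff]
  have := congrFun₂ (Matrix.commute_of_mul_self_eq_smul hΔ hSS).eq a b
  simpa [PEquiv.toMatrix_toPEquiv_mul, PEquiv.mul_toMatrix_toPEquiv] using this.symm

theorem Matrix.sum_apply_involutive_mul_apply {n K : Type*} [Fintype n]
    [DecidableEq n] [Field K] {S : Matrix n n K} {σ : n → n} (hσ : Function.Involutive σ)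
    {Δ : K} (hΔ : Δ ≠ 0)
    (hsq : ∀ i j, ∑ m, S i m * S m (σ j) = Δ * if i = j then 1 else 0) (i j : n) :
    ∑ k, S i (σ k) * S k j = Δ * if i = j then 1 else 0 := by
  rw [← hsq, ← hσ.bijective.sum_comp]
  simp only [hσ _, apply_involutive_left_eq_apply_involutive_right hσ hΔ hsq]

theorem LinearMap.map_mul_of_map_basis_mul {ι K A B : Type*} [CommSemiring K] [Semiring A]
    [Algebra K A] [Semiring B] [Algebra K B] (f : A →ₗ[K] B) (b : Module.Basis ι K A)
    (h : ∀ i j, f (b i * b j) = f (b i) * f (b j)) (a a' : A) : f (a * a') = f a * f a' := by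
  have : (LinearMap.mul K A).compr₂ f = (LinearMap.mul K B).compl₁₂ f f :=
    LinearMap.ext_basis b b h
  exact congr($this a a')

theorem sum_verlinde_mul_div {n K : Type*} [Fintype n] [DecidableEq n] [Field K]
    {S : Matrix n n K} {σ : n → n} {Δ : K} (hΔ : Δ ≠ 0) {w : n}
    (hortho : ∀ m, ∑ k, S m (σ k) * S k w = Δ * if m = w then 1 else 0) (zero i j : n) :
    ∑ k, (∑ m, S i m * S j m * S m (σ k) / (Δ * S zero m)) * (S k w / S zero w) =
      S i w / S zero w * (S j w / S zero w) :=
  calc ∑ k, (∑ m, S i m * S j m * S m (σ k) / (Δ * S zero m)) * (S k w / S zero w)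
      = ∑ m, S i m * S j m / (Δ * S zero m * S zero w) * ∑ k, S m (σ k) * S k w := by
        simp_rw [sum_mul, mul_sum]
        rw [sum_comm]
        exact sum_congr rfl fun m _ => sum_congr rfl fun k _ => by ring
    _ = S i w * S j w / (Δ * S zero w * S zero w) * Δ := by simp [hortho]
    _ = S i w / S zero w * (S j w / S zero w) := by field_simp

theorem stmt_5_general {I : Type*} [Fintype I] [DecidableEq I] {R : Type*} [Ring R] [Algebra ℂ R]
    (x : Module.Basis I ℂ R) (zero : I) (star : I → I) (S : Matrix I I ℂ) (Δ : ℂ)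
    (hS0 : ∀ i : I, S zero i ≠ 0)
    (hΔ : Δ ≠ 0)
    (hstar : Function.Involutive star)
    (hsq : ∀ i j : I, (∑ m : I, S i m * S m (star j)) = Δ * (if i = j then 1 else 0))
    (hone : x zero = 1)
    (hmul : ∀ i j : I, x i * x j =
      ∑ k : I, (∑ m : I, S i m * S j m * S m (star k) / (Δ * S zero m)) • x k)
    (w : I) (χ : R →ₗ[ℂ] ℂ)
    (hχ : ∀ i : I, χ (x i) = S i w / S zero w) :
    χ 1 = 1 ∧ ∀ a b : R, χ (a * b) = χ a * χ b := by
  have hortho := Matrix.sum_apply_involutive_mul_apply hstar hΔ hsq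
  refine ⟨by rw [← hone, hχ, div_self (hS0 w)], χ.map_mul_of_map_basis_mul x fun i j => ?_⟩
  rw [hmul, map_sum]
  simp only [map_smul, hχ, smul_eq_mul]
  exact sum_verlinde_mul_div hΔ (fun m => hortho m w) zero i j

/-- In the Verlinde fusion algebra determined by `S`, for each fixed `w` the linear
functional `χ_w` with `χ_w(x_i) = S_{i,w}/S_{0,w}` is a ℂ-algebra homomorphism:
`χ_w(1) = 1` and `χ_w(a·b) = χ_w(a)·χ_w(b)`. -/
theorem stmt_5 {I : Type*} [Fintype I] [DecidableEq I] {R : Type*} [Ring R] [Algebra ℂ R]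
    (x : Module.Basis I ℂ R) (zero : I) (star : I → I) (S : Matrix I I ℂ) (Δ : ℂ)
    (hsymm : ∀ i j : I, S i j = S j i)
    (hS0 : ∀ i : I, S zero i ≠ 0)
    (hΔ : Δ ≠ 0)
    (hstar : Function.Involutive star)
    (hsq : ∀ i j : I, (∑ m : I, S i m * S m (star j)) = Δ * (if i = j then 1 else 0))
    (hone : x zero = 1)
    (hmul : ∀ i j : I, x i * x j =
      ∑ k : I, (∑ m : I, S i m * S j m * S m (star k) / (Δ * S zero m)) • x k)
    (w : I) (χ : R →ₗ[ℂ] ℂ)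
    (hχ : ∀ i : I, χ (x i) = S i w / S zero w) :
    χ 1 = 1 ∧ ∀ a b : R, χ (a * b) = χ a * χ b :=
  stmt_5_general x zero star S Δ hS0 hΔ hstar hsq hone hmul w χ hχ
end

section
/- Let R be a based ring with finite basis B, duality *, Frobenius reciprocity, and a character d with d(x) > 0 and d(x*) = d(x) as above. Suppose R is graded by a finite group G: B = ⊔_{g∈G} B_g with 1 ∈ B_1, x·y supported on B_{gh} for x ∈ B_g, y ∈ B_h, and x* ∈ B_{g⁻¹} for x ∈ B_g. Let J ⊆ R ⊗ ℂ be the two-sided ideal generated by {x − d(x)·1 : x ∈ B_1}, and let K̄ = (R ⊗ ℂ)/J. Then for every g ∈ G and every X ∈ B_g, the image of X/d(X) in K̄ is invertible with inverse the image of X*/d(X), and for any two X, Y ∈ B_g the images of X/d(X) and Y/d(Y) in K̄ are equal. -/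
/-!
Every degree-one basis element `z` is congruent to the scalar `d(z)` modulo `J`. If
`deg x * deg y = 1`, all terms of `x * y = ∑ N_{xy}^z z` lie in degree one, so
`x * y ≡ ∑ N_{xy}^z d(z) = d(x) d(y)`, i.e. `(x / d x) * (y / d y) ≡ 1`. Taking `y = x*` gives
the two inverse statements, and for `X, Y` of the same degree, `X / d X` and `Y / d Y` are
respectively a left and a right inverse of `Y* / d Y`, so they agree.
-/

namespace TwoSidedIdeal

variable {𝕜 R : Type*} [CommSemiring 𝕜] [Ring R] [Algebra 𝕜 R]

theorem smul_mem (J : TwoSidedIdeal R) (c : 𝕜) {u : R} (hu : u ∈ J) : c • u ∈ J := by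
  rw [Algebra.smul_def]
  exact J.mul_mem_left _ _ hu

theorem sub_mem_of_mul_sub_one_mem (J : TwoSidedIdeal R) {u v w : R}
    (huw : u * w - 1 ∈ J) (hwv : w * v - 1 ∈ J) : u - v ∈ J := by
  have h : u - v = (u * w - 1) * v - u * (w * v - 1) := by noncomm_ring
  rw [h]
  exact J.sub_mem (J.mul_mem_right _ _ huw) (J.mul_mem_left _ _ hwv)

end TwoSidedIdeal

section GradedBasedRing

variable {G ι R : Type*} [Group G] [Fintype ι] [Ring R] [Algebra ℂ R]
  {b : Module.Basis ι ℂ R} {N : ι → ι → ι → ℕ} {deg : ι → G} {d : R →ₐ[ℂ] ℂ}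
  {J : TwoSidedIdeal R}

theorem mul_sub_smul_one_mem_of_deg_mul_eq_one
    (hmul : ∀ x y : ι, b x * b y = ∑ z : ι, (N x y z : ℂ) • b z)
    (hgrade : ∀ x y z : ι, N x y z ≠ 0 → deg z = deg x * deg y)
    (hJ : ∀ z : ι, deg z = 1 → b z - d (b z) • 1 ∈ J)
    {x y : ι} (hxy : deg x * deg y = 1) :
    b x * b y - (d (b x) * d (b y)) • 1 ∈ J := by
  have hd : d (b x) * d (b y) = ∑ z : ι, (N x y z : ℂ) * d (b z) := by
    simp only [← map_mul, hmul, map_sum, map_smul, smul_eq_mul]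
  have hsum : b x * b y - (d (b x) * d (b y)) • 1
      = ∑ z : ι, (N x y z : ℂ) • (b z - d (b z) • 1) := by
    simp only [hmul, hd, Finset.sum_smul, ← Finset.sum_sub_distrib, smul_sub, smul_smul]
  rw [hsum]
  refine sum_mem fun z _ => ?_
  by_cases hz : N x y z = 0
  · simp [hz, J.zero_mem]
  · exact J.smul_mem _ (hJ z (by rw [hgrade x y z hz, hxy]))

theorem normalized_mul_sub_one_mem_of_deg_mul_eq_one
    (hmul : ∀ x y : ι, b x * b y = ∑ z : ι, (N x y z : ℂ) • b z)
    (hgrade : ∀ x y z : ι, N x y z ≠ 0 → deg z = deg x * deg y)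
    (hJ : ∀ z : ι, deg z = 1 → b z - d (b z) • 1 ∈ J)
    {x y : ι} (hx : d (b x) ≠ 0) (hy : d (b y) ≠ 0) (hxy : deg x * deg y = 1) :
    ((d (b x))⁻¹ • b x) * ((d (b y))⁻¹ • b y) - 1 ∈ J := by
  have h : ((d (b x))⁻¹ • b x) * ((d (b y))⁻¹ • b y) - 1
      = ((d (b x))⁻¹ * (d (b y))⁻¹) • (b x * b y - (d (b x) * d (b y)) • 1) := by
    rw [smul_sub, smul_smul, smul_mul_smul, mul_mul_mul_comm, inv_mul_cancel₀ hx,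
      inv_mul_cancel₀ hy, one_mul, one_smul]
  rw [h]
  exact J.smul_mem _ (mul_sub_smul_one_mem_of_deg_mul_eq_one hmul hgrade hJ hxy)

end GradedBasedRing

theorem stmt_6_general {G : Type*} [Group G]
    {ι : Type*} [Fintype ι] {R : Type*} [Ring R] [Algebra ℂ R]
    (b : Module.Basis ι ℂ R) (star : ι → ι) (N : ι → ι → ι → ℕ) (deg : ι → G)
    (hmul : ∀ x y : ι, b x * b y = ∑ z : ι, (N x y z : ℂ) • b z)
    (hgrade : ∀ x y z : ι, N x y z ≠ 0 → deg z = deg x * deg y)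
    (hdegstar : ∀ x : ι, deg (star x) = (deg x)⁻¹)
    (d : R →ₐ[ℂ] ℂ)
    (hdstar : ∀ x : ι, d (b (star x)) = d (b x))
    (hdpos : ∀ x : ι, ∃ r : ℝ, 0 < r ∧ d (b x) = r) :
    ∀ J : TwoSidedIdeal R,
      J = TwoSidedIdeal.span {r : R | ∃ x : ι, deg x = 1 ∧ r = b x - d (b x) • 1} →
      ∀ X Y : ι, deg X = deg Y →
        (((d (b X))⁻¹ • b X) * ((d (b X))⁻¹ • b (star X)) - 1 ∈ J) ∧
        (((d (b X))⁻¹ • b (star X)) * ((d (b X))⁻¹ • b X) - 1 ∈ J) ∧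
        ((d (b X))⁻¹ • b X - (d (b Y))⁻¹ • b Y ∈ J) := by
  intro J hJ X Y hXY
  have hne (x : ι) : d (b x) ≠ 0 := by
    obtain ⟨r, hr, hdr⟩ := hdpos x
    exact hdr ▸ Complex.ofReal_ne_zero.mpr hr.ne'
  have hgen (z : ι) (hz : deg z = 1) : b z - d (b z) • 1 ∈ J :=
    hJ ▸ TwoSidedIdeal.subset_span ⟨z, hz, rfl⟩
  have key {x y : ι} (hxy : deg x * deg y = 1) :
      ((d (b x))⁻¹ • b x) * ((d (b y))⁻¹ • b y) - 1 ∈ J :=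
    normalized_mul_sub_one_mem_of_deg_mul_eq_one hmul hgrade hgen (hne x) (hne y) hxy
  have hstar_right (x : ι) : deg x * deg (star x) = 1 := by rw [hdegstar, mul_inv_cancel]
  have hstar_left (x : ι) : deg (star x) * deg x = 1 := by rw [hdegstar, inv_mul_cancel]
  refine ⟨?_, ?_, ?_⟩
  · simpa only [hdstar] using key (hstar_right X)
  · simpa only [hdstar] using key (hstar_left X)
  · have hX_Ystar := key (x := X) (y := star Y) (hXY ▸ hstar_right Y)
    have hYstar_Y := key (hstar_left Y)
    rw [hdstar] at hX_Ystar hYstar_Y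
    exact TwoSidedIdeal.sub_mem_of_mul_sub_one_mem _ hX_Ystar hYstar_Y

/-- Let `R` be a `G`-graded based ring with duality `star`, Frobenius reciprocity and a
positive `*`-invariant character `d`; let `J` be the two-sided ideal of `R ⊗ ℂ`
generated by `{x − d(x)·1 : x ∈ B_1}` and `K̄ = (R ⊗ ℂ)/J`.  For every `g ∈ G` and
`X ∈ B_g`, the image of `X/d(X)` in `K̄` is invertible with inverse the image of
`X*/d(X)`, and for `X, Y ∈ B_g` the images of `X/d(X)` and `Y/d(Y)` agree
(expressed via membership in `J`). -/
theorem stmt_6 {G : Type*} [Group G] [Fintype G]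
    {ι : Type*} [Fintype ι] [DecidableEq ι] {R : Type*} [Ring R] [Algebra ℂ R]
    (b : Module.Basis ι ℂ R) (one : ι) (star : ι → ι) (N : ι → ι → ι → ℕ) (deg : ι → G)
    (hone : b one = 1) (hdegone : deg one = 1)
    (hmul : ∀ x y : ι, b x * b y = ∑ z : ι, (N x y z : ℂ) • b z)
    (hgrade : ∀ x y z : ι, N x y z ≠ 0 → deg z = deg x * deg y)
    (hstar : Function.Involutive star)
    (hdegstar : ∀ x : ι, deg (star x) = (deg x)⁻¹)
    (hN1 : ∀ x y : ι, N x y one = if y = star x then 1 else 0)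
    (hFrob : ∀ x y z : ι, N x y z = N (star x) z y)
    (d : R →ₐ[ℂ] ℂ)
    (hdstar : ∀ x : ι, d (b (star x)) = d (b x))
    (hdpos : ∀ x : ι, ∃ r : ℝ, 0 < r ∧ d (b x) = r) :
    ∀ J : TwoSidedIdeal R,
      J = TwoSidedIdeal.span {r : R | ∃ x : ι, deg x = 1 ∧ r = b x - d (b x) • 1} →
      ∀ X Y : ι, deg X = deg Y →
        (((d (b X))⁻¹ • b X) * ((d (b X))⁻¹ • b (star X)) - 1 ∈ J) ∧
        (((d (b X))⁻¹ • b (star X)) * ((d (b X))⁻¹ • b X) - 1 ∈ J) ∧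
        ((d (b X))⁻¹ • b X - (d (b Y))⁻¹ • b Y ∈ J) :=
  stmt_6_general b star N deg hmul hgrade hdegstar d hdstar hdpos
end

section
/- In the setting of the previous statement, assume additionally that B_g ≠ ∅ for every g ∈ G. For each g pick X_g ∈ B_g and let ḡ denote the image of X_g/d(X_g) in K̄ = (R ⊗ ℂ)/J. Then the map G → K̄, g ↦ ḡ, is well defined (independent of the choice of X_g), satisfies ḡ·h̄ = (gh)‾ and 1̄ = 1, and extends to a surjective ℂ-algebra homomorphism ℂ[G] → K̄; if moreover dim_ℂ K̄ = |G|, this map is an isomorphism of ℂ-algebras ℂ[G] ≅ K̄. -/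
/-!
Since `J` contains `x - d(x)` for every `x ∈ B_1` and the multiplication is graded, the image
in `K̄` of every homogeneous product of degree `1` is the scalar `d` of that product. Hence the
normalised images `x / d(x)` of basis elements of degrees `g` and `g⁻¹` are mutually inverse,
which forces all normalised images of degree `g` to coincide; the same expansion of products
then gives the group law. Since `B` spans `R`, the resulting map `ℂ[G] → K̄` is onto.
-/

open Module

section GradedBasis

variable {G ι R K : Type*} [Group G] [Ring R] [Algebra ℂ R] [Ring K] [Algebra ℂ K]
  {b : Basis ι ℂ R} {deg : ι → G} {d : R →ₐ[ℂ] ℂ} {q : R →ₐ[ℂ] K}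

noncomputable def normalizedImage (q : R →ₐ[ℂ] K) (d : R →ₐ[ℂ] ℂ) (b : Basis ι ℂ R) (x : ι) :
    K :=
  q ((d (b x))⁻¹ • b x)

theorem map_basis_eq_smul_normalizedImage {x : ι} (hx : d (b x) ≠ 0) :
    q (b x) = d (b x) • normalizedImage q d b x := by
  rw [normalizedImage, map_smul, smul_smul, mul_inv_cancel₀ hx, one_smul]

theorem map_basis_mul_eq_smul [Fintype ι]
    (hgr : ∀ x y z, b.repr (b x * b y) z ≠ 0 → deg z = deg x * deg y)
    {g : G} {k : K} (hk : ∀ z, deg z = g → q (b z) = d (b z) • k)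
    {x y : ι} (hxy : deg x * deg y = g) :
    q (b x * b y) = d (b x * b y) • k := by
  conv_lhs => rw [← b.sum_repr (b x * b y)]
  conv_rhs => rw [← b.sum_repr (b x * b y)]
  simp only [map_sum, map_smul, smul_eq_mul, Finset.sum_smul, mul_smul]
  refine Finset.sum_congr rfl fun z _ => ?_
  by_cases hz : b.repr (b x * b y) z = 0
  · simp only [hz, zero_smul]
  · rw [hk z (hxy ▸ hgr x y z hz)]

theorem normalizedImage_mul_eq [Fintype ι]
    (hgr : ∀ x y z, b.repr (b x * b y) z ≠ 0 → deg z = deg x * deg y)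
    {g : G} {k : K} (hk : ∀ z, deg z = g → q (b z) = d (b z) • k)
    {x y : ι} (hxy : deg x * deg y = g) (hx : d (b x) ≠ 0) (hy : d (b y) ≠ 0) :
    normalizedImage q d b x * normalizedImage q d b y = k := by
  rw [normalizedImage, normalizedImage, map_smul, map_smul, smul_mul_smul_comm, ← map_mul,
    map_basis_mul_eq_smul hgr hk hxy, smul_smul, map_mul, mul_mul_mul_comm,
    inv_mul_cancel₀ hx, inv_mul_cancel₀ hy, one_mul, one_smul]

theorem normalizedImage_eq_one (h1 : ∀ z, deg z = 1 → q (b z) = d (b z) • 1)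
    {x : ι} (hdeg : deg x = 1) (hx : d (b x) ≠ 0) :
    normalizedImage q d b x = 1 := by
  rw [normalizedImage, map_smul, h1 x hdeg, smul_smul, inv_mul_cancel₀ hx, one_smul]

theorem normalizedImage_eq_of_deg_eq [Fintype ι]
    (hgr : ∀ x y z, b.repr (b x * b y) z ≠ 0 → deg z = deg x * deg y)
    (h1 : ∀ z, deg z = 1 → q (b z) = d (b z) • 1) (hd : ∀ x, d (b x) ≠ 0)
    {x x' y : ι} (hxx' : deg x = deg x') (hy : deg y = (deg x)⁻¹) :
    normalizedImage q d b x = normalizedImage q d b x' := by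
  have hxy : normalizedImage q d b x * normalizedImage q d b y = 1 :=
    normalizedImage_mul_eq hgr h1 (by rw [hy, mul_inv_cancel]) (hd x) (hd y)
  have hyx' : normalizedImage q d b y * normalizedImage q d b x' = 1 :=
    normalizedImage_mul_eq hgr h1 (by rw [hy, ← hxx', inv_mul_cancel]) (hd y) (hd x')
  calc normalizedImage q d b x
      = normalizedImage q d b x * (normalizedImage q d b y * normalizedImage q d b x') := by
        rw [hyx', mul_one]
    _ = normalizedImage q d b x' := by rw [← mul_assoc, hxy, one_mul]

end GradedBasis

theorem AlgHom.surjective_of_map_basis_mem_range {ι R A K : Type*} [Ring R] [Algebra ℂ R]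
    [Ring A] [Algebra ℂ A] [Ring K] [Algebra ℂ K] (b : Basis ι ℂ R) {q : R →ₐ[ℂ] K}
    (hq : Function.Surjective q) (φ : A →ₐ[ℂ] K) (h : ∀ x, q (b x) ∈ φ.range) :
    Function.Surjective φ := by
  have hspan : Submodule.span ℂ (Set.range b) ≤
      (Subalgebra.toSubmodule φ.range).comap q.toLinearMap :=
    Submodule.span_le.2 (Set.range_subset_iff.2 h)
  intro k
  obtain ⟨r, rfl⟩ := hq k
  exact hspan (b.span_eq ▸ Submodule.mem_top : r ∈ Submodule.span ℂ (Set.range b))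

theorem MonoidAlgebra.bijective_of_surjective_of_finrank_eq {k G K : Type*} [Field k] [Group G]
    [Fintype G] [Ring K] [Algebra k K] {φ : MonoidAlgebra k G →ₐ[k] K}
    (hφ : Function.Surjective φ) (hdim : finrank k K = Fintype.card G) :
    Function.Bijective φ := by
  have hrank : finrank k (MonoidAlgebra k G) = finrank k K := by
    rw [hdim, (MonoidAlgebra.coeffLinearEquiv k (S := k) (M := G)).finrank_eq,
      finrank_finsupp_self]
  have : FiniteDimensional k K := Module.finite_of_finrank_pos (hdim ▸ Fintype.card_pos)
  exact ⟨(LinearMap.injective_iff_surjective_of_finrank_eq_finrank hrank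
    (f := φ.toLinearMap)).2 hφ, hφ⟩

theorem stmt_7_general {G : Type*} [Group G] [Fintype G]
    {ι : Type*} [Fintype ι] {R : Type*} [Ring R] [Algebra ℂ R]
    (b : Module.Basis ι ℂ R) (N : ι → ι → ι → ℕ) (deg : ι → G)
    (hmul : ∀ x y : ι, b x * b y = ∑ z : ι, (N x y z : ℂ) • b z)
    (hgrade : ∀ x y z : ι, N x y z ≠ 0 → deg z = deg x * deg y)
    (d : R →ₐ[ℂ] ℂ)
    (hdpos : ∀ x : ι, ∃ r : ℝ, 0 < r ∧ d (b x) = r)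
    -- every graded piece is nonempty, with a chosen representative `sel g ∈ B_g`
    (sel : G → ι) (hsel : ∀ g : G, deg (sel g) = g)
    -- `K̄` is the quotient of `R` by the two-sided ideal `J`
    (Kbar : Type*) [Ring Kbar] [Algebra ℂ Kbar]
    (q : R →ₐ[ℂ] Kbar) (hq : Function.Surjective q)
    (hker : ∀ r : R, q r = 0 ↔
      r ∈ TwoSidedIdeal.span {r : R | ∃ x : ι, deg x = 1 ∧ r = b x - d (b x) • 1}) :
    -- well-definedness: the image depends only on the degree
    (∀ (g : G) (x : ι), deg x = g →
        q ((d (b x))⁻¹ • b x) = q ((d (b (sel g)))⁻¹ • b (sel g))) ∧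
    -- group law
    (∀ g h : G, q ((d (b (sel g)))⁻¹ • b (sel g)) * q ((d (b (sel h)))⁻¹ • b (sel h)) =
        q ((d (b (sel (g * h))))⁻¹ • b (sel (g * h)))) ∧
    q ((d (b (sel 1)))⁻¹ • b (sel 1)) = 1 ∧
    -- extension to a surjective algebra homomorphism from the group algebra
    ∃ φ : MonoidAlgebra ℂ G →ₐ[ℂ] Kbar,
      (∀ g : G, φ (MonoidAlgebra.of ℂ G g) = q ((d (b (sel g)))⁻¹ • b (sel g))) ∧
      Function.Surjective φ ∧
      (Module.finrank ℂ Kbar = Fintype.card G → Function.Bijective φ) := by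
  have hgr : ∀ x y z, b.repr (b x * b y) z ≠ 0 → deg z = deg x * deg y := fun x y z hz =>
    hgrade x y z (by rwa [hmul, b.repr_sum_self, Nat.cast_ne_zero] at hz)
  have h1 : ∀ z, deg z = 1 → q (b z) = d (b z) • 1 := fun z hz => by
    simpa [sub_eq_zero] using (hker _).2 (TwoSidedIdeal.subset_span ⟨z, hz, rfl⟩)
  have hd : ∀ x, d (b x) ≠ 0 := fun x => by
    obtain ⟨r, hr, hrx⟩ := hdpos x
    exact hrx ▸ Complex.ofReal_ne_zero.2 hr.ne'
  have hwd : ∀ g x, deg x = g → normalizedImage q d b x = normalizedImage q d b (sel g) :=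
    fun g x hx => normalizedImage_eq_of_deg_eq hgr h1 hd (hx.trans (hsel g).symm)
      (by rw [hsel, hx])
  have hqb : ∀ z, q (b z) = d (b z) • normalizedImage q d b (sel (deg z)) := fun z => by
    rw [← hwd _ z rfl, ← map_basis_eq_smul_normalizedImage (hd z)]
  have hlaw : ∀ g h, normalizedImage q d b (sel g) * normalizedImage q d b (sel h) =
      normalizedImage q d b (sel (g * h)) := fun g h =>
    normalizedImage_mul_eq hgr (fun z hz => by rw [hqb z, hz]) (by rw [hsel, hsel]) (hd _) (hd _)
  have hunit : normalizedImage q d b (sel 1) = 1 := normalizedImage_eq_one h1 (hsel 1) (hd _)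
  let φ := MonoidAlgebra.lift ℂ Kbar G
    { toFun := fun g => normalizedImage q d b (sel g)
      map_one' := hunit
      map_mul' := fun g h => (hlaw g h).symm }
  have hφ : ∀ g, φ (MonoidAlgebra.of ℂ G g) = normalizedImage q d b (sel g) :=
    MonoidAlgebra.lift_of _
  have hsurj : Function.Surjective φ := AlgHom.surjective_of_map_basis_mem_range b hq φ
    fun x => hqb x ▸ Subalgebra.smul_mem _ ((AlgHom.mem_range φ).2 ⟨_, hφ (deg x)⟩) _
  exact ⟨hwd, hlaw, hunit, φ, hφ, hsurj,
    MonoidAlgebra.bijective_of_surjective_of_finrank_eq hsurj⟩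

/-- In the `G`-graded based ring setting with nonempty graded pieces, choosing
`X_g ∈ B_g` and setting `ḡ = q(X_g/d(X_g))` in `K̄ = (R ⊗ ℂ)/J` gives a well-defined
map (independent of the choices), satisfying `ḡ·h̄ = (gh)‾` and `1̄ = 1`, which extends
to a surjective ℂ-algebra homomorphism `ℂ[G] → K̄`; if `dim K̄ = |G|` it is an
isomorphism. -/
theorem stmt_7 {G : Type*} [Group G] [Fintype G]
    {ι : Type*} [Fintype ι] [DecidableEq ι] {R : Type*} [Ring R] [Algebra ℂ R]
    (b : Module.Basis ι ℂ R) (one : ι) (star : ι → ι) (N : ι → ι → ι → ℕ) (deg : ι → G)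
    (hone : b one = 1) (hdegone : deg one = 1)
    (hmul : ∀ x y : ι, b x * b y = ∑ z : ι, (N x y z : ℂ) • b z)
    (hgrade : ∀ x y z : ι, N x y z ≠ 0 → deg z = deg x * deg y)
    (hstar : Function.Involutive star)
    (hdegstar : ∀ x : ι, deg (star x) = (deg x)⁻¹)
    (hN1 : ∀ x y : ι, N x y one = if y = star x then 1 else 0)
    (hFrob : ∀ x y z : ι, N x y z = N (star x) z y)
    (d : R →ₐ[ℂ] ℂ)
    (hdstar : ∀ x : ι, d (b (star x)) = d (b x))
    (hdpos : ∀ x : ι, ∃ r : ℝ, 0 < r ∧ d (b x) = r)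
    -- every graded piece is nonempty, with a chosen representative `sel g ∈ B_g`
    (sel : G → ι) (hsel : ∀ g : G, deg (sel g) = g)
    -- `K̄` is the quotient of `R` by the two-sided ideal `J`
    (Kbar : Type*) [Ring Kbar] [Algebra ℂ Kbar]
    (q : R →ₐ[ℂ] Kbar) (hq : Function.Surjective q)
    (hker : ∀ r : R, q r = 0 ↔
      r ∈ TwoSidedIdeal.span {r : R | ∃ x : ι, deg x = 1 ∧ r = b x - d (b x) • 1}) :
    -- well-definedness: the image depends only on the degree
    (∀ (g : G) (x : ι), deg x = g →
        q ((d (b x))⁻¹ • b x) = q ((d (b (sel g)))⁻¹ • b (sel g))) ∧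
    -- group law
    (∀ g h : G, q ((d (b (sel g)))⁻¹ • b (sel g)) * q ((d (b (sel h)))⁻¹ • b (sel h)) =
        q ((d (b (sel (g * h))))⁻¹ • b (sel (g * h)))) ∧
    q ((d (b (sel 1)))⁻¹ • b (sel 1)) = 1 ∧
    -- extension to a surjective algebra homomorphism from the group algebra
    ∃ φ : MonoidAlgebra ℂ G →ₐ[ℂ] Kbar,
      (∀ g : G, φ (MonoidAlgebra.of ℂ G g) = q ((d (b (sel g)))⁻¹ • b (sel g))) ∧
      Function.Surjective φ ∧
      (Module.finrank ℂ Kbar = Fintype.card G → Function.Bijective φ) :=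
  stmt_7_general b N deg hmul hgrade d hdpos sel hsel Kbar q hq hker
end

section
/- Fix n ≥ 1, let m = 2n+1, and let D = D_{2m} be the dihedral group of order 2m with cyclic subgroup H = ⟨τ⟩ of order m. Define R to be the free ℤ-module with basis D ∪ {X, Y} and bilinear multiplication determined by: group multiplication on D; h·X = X·h = X and h·Y = Y·h = Y for h ∈ H; g·X = X·g = Y and g·Y = Y·g = X for g ∈ D∖H; X² = Y² = Σ_{h∈H} h; and X·Y = Y·X = Σ_{g∈D∖H} g. Then R is an associative unital ring with unit the identity element of D. -/
/-!
Let `H` be a subgroup of index two of a finite group `G` and let `parity : G → Bool` record the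
coset, a homomorphism to `ℤ/2` written with `xor`. Writing `X_c` for the basis vector `Sum.inr c`
(so `X = X_false`, `Y = X_true`), the whole multiplication table reads
`g X_c = X_c g = X_(parity g ^^ c)` and `X_c X_d = Σ {g | parity g = c ^^ d}`. Associativity
only has to be checked on basis triples, and each case comes down to three facts: `parity` is
multiplicative, translations permute the cosets compatibly with `parity`, and both cosets have
`|H|` elements, which gives
`(X_c X_d) X_e = |H| X_(c ^^ d ^^ e) = X_c (X_d X_e)`.
-/

open Finsupp Finset

theorem Finsupp.bilinear_assoc_of_single {R α : Type*} [CommSemiring R]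
    (μ : (α →₀ R) →ₗ[R] (α →₀ R) →ₗ[R] α →₀ R)
    (h : ∀ x y z, μ (μ (single x 1) (single y 1)) (single z 1) =
      μ (single x 1) (μ (single y 1) (single z 1)))
    (a b c : α →₀ R) : μ (μ a b) c = μ a (μ b c) := by
  induction a using Finsupp.induction_linear with
  | zero => simp
  | add a a' ha ha' => simp only [map_add, LinearMap.add_apply, ha, ha']
  | single x r =>
    induction b using Finsupp.induction_linear with
    | zero => simp
    | add b b' hb hb' => simp only [map_add, LinearMap.add_apply, hb, hb']
    | single y s =>
      induction c using Finsupp.induction_linear with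
      | zero => simp
      | add c c' hc hc' => simp only [map_add, hc, hc']
      | single z t =>
        rw [← smul_single_one x r, ← smul_single_one y s, ← smul_single_one z t]
        simp only [map_smul, LinearMap.smul_apply, h]

theorem Finsupp.bilinear_one_left_of_single {R α : Type*} [CommSemiring R]
    (μ : (α →₀ R) →ₗ[R] (α →₀ R) →ₗ[R] α →₀ R) (e : α)
    (h : ∀ y, μ (single e 1) (single y 1) = single y 1) (a : α →₀ R) :
    μ (single e 1) a = a :=
  LinearMap.congr_fun (Finsupp.lhom_ext (φ := μ (single e 1)) (ψ := LinearMap.id)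
    fun y r => by rw [← smul_single_one y r, map_smul, h, LinearMap.id_apply]) a

theorem Finsupp.bilinear_one_right_of_single {R α : Type*} [CommSemiring R]
    (μ : (α →₀ R) →ₗ[R] (α →₀ R) →ₗ[R] α →₀ R) (e : α)
    (h : ∀ y, μ (single y 1) (single e 1) = single y 1) (a : α →₀ R) :
    μ a (single e 1) = a :=
  Finsupp.bilinear_one_left_of_single μ.flip e h a

namespace IndexTwoFusionRing

variable {G : Type*} [Group G] (H : Subgroup G)

open scoped Classical in
noncomputable def parity (g : G) : Bool := decide (g ∉ H)

variable {H}

theorem parity_one : parity H 1 = false := by simp [parity, H.one_mem]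

theorem parity_mul (hH : H.index = 2) (g h : G) :
    parity H (g * h) = (parity H g ^^ parity H h) := by
  by_cases hg : g ∈ H <;> by_cases hh : h ∈ H <;>
    simp [parity, hg, hh, Subgroup.mul_mem_iff_of_index_two hH]

variable (H) [Fintype G]

open scoped Classical in
noncomputable def cosetSum (b : Bool) : G ⊕ Bool →₀ ℤ :=
  ∑ g with parity H g = b, single (.inl g) 1

noncomputable def basisMul : G ⊕ Bool → G ⊕ Bool → (G ⊕ Bool →₀ ℤ)
  | .inl g, .inl h => single (.inl (g * h)) 1
  | .inl g, .inr c => single (.inr (parity H g ^^ c)) 1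
  | .inr c, .inl g => single (.inr (c ^^ parity H g)) 1
  | .inr c, .inr d => cosetSum H (c ^^ d)

noncomputable def mul : (G ⊕ Bool →₀ ℤ) →ₗ[ℤ] (G ⊕ Bool →₀ ℤ) →ₗ[ℤ] G ⊕ Bool →₀ ℤ :=
  linearCombination ℤ fun x => linearCombination ℤ (basisMul H x)

@[simp]
theorem mul_single_single (x y : G ⊕ Bool) :
    mul H (single x 1) (single y 1) = basisMul H x y := by
  simp [mul]

variable {H}

theorem mul_single_cosetSum (hH : H.index = 2) (g : G) (b : Bool) :
    mul H (single (.inl g) 1) (cosetSum H b) = cosetSum H (parity H g ^^ b) := by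
  classical
  simp only [cosetSum, map_sum, mul_single_single, basisMul]
  exact Finset.sum_equiv (Equiv.mulLeft g) (by simp [parity_mul hH]) (by simp)

theorem mul_cosetSum_single (hH : H.index = 2) (g : G) (b : Bool) :
    mul H (cosetSum H b) (single (.inl g) 1) = cosetSum H (b ^^ parity H g) := by
  classical
  simp only [cosetSum, map_sum, LinearMap.sum_apply, mul_single_single, basisMul]
  exact Finset.sum_equiv (Equiv.mulRight g) (by simp [parity_mul hH]) (by simp)

open scoped Classical in
theorem card_parity_eq (hH : H.index = 2) (b b' : Bool) :
    #{g | parity H g = b} = #{g | parity H g = b'} := by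
  obtain ⟨a, haH, -⟩ := Subgroup.index_eq_two_iff_exists_notMem_and'.mp hH
  have hpa : parity H a = true := by simp [parity, haH]
  have hflip (b : Bool) : #{g | parity H g = b} = #{g | parity H g = !b} :=
    card_equiv (Equiv.mulLeft a) fun g => by simp [parity_mul hH, hpa]
  cases b <;> cases b' <;> first | rfl | exact hflip _

open scoped Classical in
theorem mul_cosetSum_inr (hH : H.index = 2) (b c : Bool) :
    mul H (cosetSum H b) (single (.inr c) 1) =
      #{g | parity H g = false} • single (.inr (b ^^ c)) 1 := by
  simp only [cosetSum, map_sum, LinearMap.sum_apply, mul_single_single, basisMul]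
  rw [sum_congr rfl fun g hg => by rw [(mem_filter.mp hg).2], sum_const, card_parity_eq hH b]

open scoped Classical in
theorem mul_inr_cosetSum (hH : H.index = 2) (b c : Bool) :
    mul H (single (.inr c) 1) (cosetSum H b) =
      #{g | parity H g = false} • single (.inr (c ^^ b)) 1 := by
  simp only [cosetSum, map_sum, mul_single_single, basisMul]
  rw [sum_congr rfl fun g hg => by rw [(mem_filter.mp hg).2], sum_const, card_parity_eq hH b]

theorem mul_basisMul_single (hH : H.index = 2) (x y z : G ⊕ Bool) :
    mul H (basisMul H x y) (single z 1) = mul H (single x 1) (basisMul H y z) := by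
  rcases x with g | c <;> rcases y with h | d <;> rcases z with k | e <;>
    simp [basisMul, mul_single_cosetSum hH, mul_cosetSum_single hH, mul_cosetSum_inr hH,
      mul_inr_cosetSum hH, parity_mul hH, mul_assoc]

protected theorem mul_assoc (hH : H.index = 2) (a b c : G ⊕ Bool →₀ ℤ) :
    mul H (mul H a b) c = mul H a (mul H b c) :=
  bilinear_assoc_of_single _ (fun x y z => by simp [mul_basisMul_single hH]) a b c

protected theorem one_mul (a : G ⊕ Bool →₀ ℤ) : mul H (single (.inl 1) 1) a = a :=
  bilinear_one_left_of_single _ _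
    (fun y => by rcases y with h | c <;> simp [basisMul, parity_one]) a

protected theorem mul_one (a : G ⊕ Bool →₀ ℤ) : mul H a (single (.inl 1) 1) = a :=
  bilinear_one_right_of_single _ _
    (fun y => by rcases y with h | c <;> simp [basisMul, parity_one]) a

end IndexTwoFusionRing

namespace DihedralGroup

variable {m : ℕ}

theorem sum_univ [NeZero m] {M : Type*} [AddCommMonoid M] (f : DihedralGroup m → M) :
    ∑ g, f g = ∑ i, f (r i) + ∑ i, f (sr i) :=
  (Fintype.sum_equiv equivSum.symm _ f fun _ => rfl).symm.trans (Fintype.sum_sum_type _)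

theorem r_mem_zpowers_r_one [NeZero m] (i : ZMod m) :
    r i ∈ Subgroup.zpowers (r 1 : DihedralGroup m) :=
  ⟨i.val, by simp⟩

theorem sr_notMem_zpowers_r_one (i : ZMod m) :
    sr i ∉ Subgroup.zpowers (r 1 : DihedralGroup m) := by
  simp [Subgroup.mem_zpowers_iff]

theorem index_zpowers_r_one [NeZero m] : (Subgroup.zpowers (r 1 : DihedralGroup m)).index = 2 :=
  Subgroup.index_eq_two_iff'.mpr ⟨sr 0, fun g => by
    cases g <;> simp [sr_mul_r, sr_mul_sr, r_mem_zpowers_r_one, sr_notMem_zpowers_r_one]⟩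

end DihedralGroup

namespace IndexTwoFusionRing

open DihedralGroup

variable {m : ℕ}

@[simp]
theorem parity_sr (i : ZMod m) : parity (Subgroup.zpowers (r 1)) (sr i) = true := by
  simp [parity, sr_notMem_zpowers_r_one]

variable [NeZero m]

@[simp]
theorem parity_r (i : ZMod m) : parity (Subgroup.zpowers (r 1)) (r i) = false := by
  simp [parity, r_mem_zpowers_r_one]

theorem cosetSum_zpowers_r_one_false :
    cosetSum (Subgroup.zpowers (r 1 : DihedralGroup m)) false = ∑ i, single (.inl (r i)) 1 := by
  simp [cosetSum, sum_filter, sum_univ]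

theorem cosetSum_zpowers_r_one_true :
    cosetSum (Subgroup.zpowers (r 1 : DihedralGroup m)) true = ∑ i, single (.inl (sr i)) 1 := by
  simp [cosetSum, sum_filter, sum_univ]

end IndexTwoFusionRing

open DihedralGroup

theorem stmt_13_general (n : ℕ) :
    ∃ mul : ((DihedralGroup (2 * n + 1)) ⊕ Bool →₀ ℤ) →
        ((DihedralGroup (2 * n + 1)) ⊕ Bool →₀ ℤ) →
        ((DihedralGroup (2 * n + 1)) ⊕ Bool →₀ ℤ),
      -- biadditivity
      (∀ a a' c, mul (a + a') c = mul a c + mul a' c) ∧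
      (∀ a c c', mul a (c + c') = mul a c + mul a c') ∧
      -- associativity
      (∀ a b c, mul (mul a b) c = mul a (mul b c)) ∧
      -- the identity of the dihedral group is a two-sided unit
      (∀ a, mul (Finsupp.single (Sum.inl 1) 1) a = a ∧
            mul a (Finsupp.single (Sum.inl 1) 1) = a) ∧
      -- group multiplication on `D`
      (∀ g h : DihedralGroup (2 * n + 1),
        mul (Finsupp.single (Sum.inl g) 1) (Finsupp.single (Sum.inl h) 1)
          = Finsupp.single (Sum.inl (g * h)) 1) ∧
      -- rotations act trivially on `X` and `Y`
      (∀ (i : ZMod (2 * n + 1)) (c : Bool),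
        mul (Finsupp.single (Sum.inl (DihedralGroup.r i)) 1) (Finsupp.single (Sum.inr c) 1)
          = Finsupp.single (Sum.inr c) 1 ∧
        mul (Finsupp.single (Sum.inr c) 1) (Finsupp.single (Sum.inl (DihedralGroup.r i)) 1)
          = Finsupp.single (Sum.inr c) 1) ∧
      -- reflections interchange `X` and `Y`
      (∀ (i : ZMod (2 * n + 1)) (c : Bool),
        mul (Finsupp.single (Sum.inl (DihedralGroup.sr i)) 1) (Finsupp.single (Sum.inr c) 1)
          = Finsupp.single (Sum.inr (!c)) 1 ∧
        mul (Finsupp.single (Sum.inr c) 1) (Finsupp.single (Sum.inl (DihedralGroup.sr i)) 1)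
          = Finsupp.single (Sum.inr (!c)) 1) ∧
      -- `X² = Y² = Σ_{h ∈ H} h`
      (∀ c : Bool,
        mul (Finsupp.single (Sum.inr c) 1) (Finsupp.single (Sum.inr c) 1)
          = ∑ i : ZMod (2 * n + 1), Finsupp.single (Sum.inl (DihedralGroup.r i)) 1) ∧
      -- `XY = YX = Σ_{g ∉ H} g`
      (∀ c : Bool,
        mul (Finsupp.single (Sum.inr c) 1) (Finsupp.single (Sum.inr (!c)) 1)
          = ∑ i : ZMod (2 * n + 1), Finsupp.single (Sum.inl (DihedralGroup.sr i)) 1) := by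
  open IndexTwoFusionRing in
  refine ⟨fun a b => mul (Subgroup.zpowers (r 1)) a b, fun a a' c => by simp,
    fun a c c' => by simp, IndexTwoFusionRing.mul_assoc index_zpowers_r_one,
    fun a => ⟨IndexTwoFusionRing.one_mul a, IndexTwoFusionRing.mul_one a⟩, ?_, ?_, ?_, ?_, ?_⟩ <;>
    simp [basisMul, cosetSum_zpowers_r_one_false, cosetSum_zpowers_r_one_true]

/-- The free ℤ-module on `D_{2m} ∪ {X, Y}` (`m = 2n+1`), with multiplication
determined by the group law on `D_{2m}`, `hX = Xh = X`, `hY = Yh = Y` for `h` in the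
rotation subgroup `H`, `gX = Xg = Y`, `gY = Yg = X` for reflections `g`,
`X² = Y² = Σ_{h∈H} h` and `XY = YX = Σ_{g∉H} g`, is an associative unital ring with
unit the identity of `D_{2m}`.  Here `X, Y` are encoded as `Sum.inr false`,
`Sum.inr true`. -/
theorem stmt_13 (n : ℕ) (hn : 1 ≤ n) :
    ∃ mul : ((DihedralGroup (2 * n + 1)) ⊕ Bool →₀ ℤ) →
        ((DihedralGroup (2 * n + 1)) ⊕ Bool →₀ ℤ) →
        ((DihedralGroup (2 * n + 1)) ⊕ Bool →₀ ℤ),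
      -- biadditivity
      (∀ a a' c, mul (a + a') c = mul a c + mul a' c) ∧
      (∀ a c c', mul a (c + c') = mul a c + mul a c') ∧
      -- associativity
      (∀ a b c, mul (mul a b) c = mul a (mul b c)) ∧
      -- the identity of the dihedral group is a two-sided unit
      (∀ a, mul (Finsupp.single (Sum.inl 1) 1) a = a ∧
            mul a (Finsupp.single (Sum.inl 1) 1) = a) ∧
      -- group multiplication on `D`
      (∀ g h : DihedralGroup (2 * n + 1),
        mul (Finsupp.single (Sum.inl g) 1) (Finsupp.single (Sum.inl h) 1)
          = Finsupp.single (Sum.inl (g * h)) 1) ∧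
      -- rotations act trivially on `X` and `Y`
      (∀ (i : ZMod (2 * n + 1)) (c : Bool),
        mul (Finsupp.single (Sum.inl (DihedralGroup.r i)) 1) (Finsupp.single (Sum.inr c) 1)
          = Finsupp.single (Sum.inr c) 1 ∧
        mul (Finsupp.single (Sum.inr c) 1) (Finsupp.single (Sum.inl (DihedralGroup.r i)) 1)
          = Finsupp.single (Sum.inr c) 1) ∧
      -- reflections interchange `X` and `Y`
      (∀ (i : ZMod (2 * n + 1)) (c : Bool),
        mul (Finsupp.single (Sum.inl (DihedralGroup.sr i)) 1) (Finsupp.single (Sum.inr c) 1)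
          = Finsupp.single (Sum.inr (!c)) 1 ∧
        mul (Finsupp.single (Sum.inr c) 1) (Finsupp.single (Sum.inl (DihedralGroup.sr i)) 1)
          = Finsupp.single (Sum.inr (!c)) 1) ∧
      -- `X² = Y² = Σ_{h ∈ H} h`
      (∀ c : Bool,
        mul (Finsupp.single (Sum.inr c) 1) (Finsupp.single (Sum.inr c) 1)
          = ∑ i : ZMod (2 * n + 1), Finsupp.single (Sum.inl (DihedralGroup.r i)) 1) ∧
      -- `XY = YX = Σ_{g ∉ H} g`
      (∀ c : Bool,
        mul (Finsupp.single (Sum.inr c) 1) (Finsupp.single (Sum.inr (!c)) 1)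
          = ∑ i : ZMod (2 * n + 1), Finsupp.single (Sum.inl (DihedralGroup.sr i)) 1) :=
  stmt_13_general n
end
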